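/- arXiv:2202.12982 — 6 statements merged into one kernel-verified Lean document; each statement's English description precedes it below -/
import Mathlib

section
/- The relation ~ on Σ_G, defined by g ~ g' if and only if g is Σ_G-connected to g', is an equivalence relation. -/
open Submodule

section
variable {G : Type*} [CommGroup G]

/-- A chain connection: a nonempty list `c` starting at `g`, with all entries in
`Main ∪ Other`, all proper partial products in `Main`, and total product `g'` or `g'⁻¹`. -/
def ChainConnected (Main Other : Set G) (g g' : G) : Prop :=
  ∃ c : List G, c ≠ [] ∧ c.head? = some g ∧
    (∀ k ∈ c, k ∈ Main ∪ Other) ∧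
    (∀ i : ℕ, 0 < i → i < c.length → (c.take i).prod ∈ Main) ∧
    (c.prod = g' ∨ c.prod = g'⁻¹)

end

/-- A `G`-graded Lie-Rinehart algebra `(L, A)` over a field `F`. -/
structure GradedLieRinehart (F : Type*) [Field F] (G : Type*) [CommGroup G] [DecidableEq G]
    (A : Type*) [CommRing A] [Algebra F A]
    (L : Type*) [LieRing L] [LieAlgebra F L] [Module A L] [IsScalarTower F A L] where
  ρ : L →ₗ[F] Derivation F A A
  ρ_smul : ∀ (a : A) (v : L) (b : A), ρ (a • v) b = a * ρ v b
  ρ_bracket : ∀ v w : L, ρ ⁅v, w⁆ = ⁅ρ v, ρ w⁆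
  leibniz : ∀ (v w : L) (a : A), ⁅v, a • w⁆ = a • ⁅v, w⁆ + (ρ v a) • w
  𝓛 : G → Submodule F L
  𝓐 : G → Submodule F A
  internalL : DirectSum.IsInternal 𝓛
  internalA : DirectSum.IsInternal 𝓐
  bracket_mem : ∀ {g h : G} {v w : L}, v ∈ 𝓛 g → w ∈ 𝓛 h → ⁅v, w⁆ ∈ 𝓛 (g * h)
  mul_mem : ∀ {g h : G} {a b : A}, a ∈ 𝓐 g → b ∈ 𝓐 h → a * b ∈ 𝓐 (g * h)
  smul_mem : ∀ {h g : G} {a : A} {v : L}, a ∈ 𝓐 h → v ∈ 𝓛 g → a • v ∈ 𝓛 (h * g)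
  rho_mem : ∀ {g h : G} {v : L} {a : A}, v ∈ 𝓛 g → a ∈ 𝓐 h → ρ v a ∈ 𝓐 (g * h)

namespace GradedLieRinehart

variable {F : Type*} [Field F] {G : Type*} [CommGroup G] [DecidableEq G]
  {A : Type*} [CommRing A] [Algebra F A]
  {L : Type*} [LieRing L] [LieAlgebra F L] [Module A L] [IsScalarTower F A L]
variable (𝔏 : GradedLieRinehart F G A L)

/-- The support `Σ_G` of the grading of `L`. -/
def SuppL : Set G := {g | g ≠ 1 ∧ 𝔏.𝓛 g ≠ ⊥}

/-- The support `Λ_G` of the grading of `A`. -/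
def SuppA : Set G := {g | g ≠ 1 ∧ 𝔏.𝓐 g ≠ ⊥}

/-- `Σ_G^± = Σ_G ∪ Σ_G⁻¹`. -/
def Spm : Set G := {g | g ∈ 𝔏.SuppL ∨ g⁻¹ ∈ 𝔏.SuppL}

/-- `Λ_G^± = Λ_G ∪ Λ_G⁻¹`. -/
def Lpm : Set G := {g | g ∈ 𝔏.SuppA ∨ g⁻¹ ∈ 𝔏.SuppA}

/-- `g` is `Σ_G`-connected to `g'`. -/
def SigmaConnected (g g' : G) : Prop := ChainConnected 𝔏.Spm 𝔏.Lpm g g'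

/-- `g` is `Λ_G`-connected to `g'`. -/
def LambdaConnected (g g' : G) : Prop := ChainConnected (𝔏.Lpm ∪ 𝔏.Spm) (∅ : Set G) g g'

/-- The span of products `A_h • L_g`. -/
def smulSub (h g : G) : Submodule F L :=
  Submodule.span F {x | ∃ a ∈ 𝔏.𝓐 h, ∃ v ∈ 𝔏.𝓛 g, x = a • v}

/-- The span of brackets `[L_h, L_g]`. -/
def bracketSub (h g : G) : Submodule F L :=
  Submodule.span F {x | ∃ v ∈ 𝔏.𝓛 h, ∃ w ∈ 𝔏.𝓛 g, x = ⁅v, w⁆}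

/-- `L_{[g],1}`. -/
def L1class (g : G) : Submodule F L :=
  (⨆ g' ∈ {g' | g' ∈ 𝔏.SuppL ∧ 𝔏.SigmaConnected g g' ∧ g' ∈ 𝔏.SuppA}, 𝔏.smulSub g'⁻¹ g') ⊔
  (⨆ g' ∈ {g' | g' ∈ 𝔏.SuppL ∧ 𝔏.SigmaConnected g g'}, 𝔏.bracketSub g'⁻¹ g')

/-- `V_{[g]}`. -/
def Vclass (g : G) : Submodule F L :=
  ⨆ g' ∈ {g' | g' ∈ 𝔏.SuppL ∧ 𝔏.SigmaConnected g g'}, 𝔏.𝓛 g'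

/-- The ideal `I_{[g]} = L_{[g],1} ⊕ V_{[g]}` attached to the class of `g`. -/
def Iclass (g : G) : Submodule F L := 𝔏.L1class g ⊔ 𝔏.Vclass g

/-- `Σ_{g ∈ Σ_G ∩ Λ_G} A_{g⁻¹} L_g + Σ_{g ∈ Σ_G} [L_{g⁻¹}, L_g]`. -/
def L1full : Submodule F L :=
  (⨆ g ∈ 𝔏.SuppL ∩ 𝔏.SuppA, 𝔏.smulSub g⁻¹ g) ⊔ (⨆ g ∈ 𝔏.SuppL, 𝔏.bracketSub g⁻¹ g)

/-- An ideal of the Lie-Rinehart algebra `(L,A)`: a Lie ideal which is an `A`-submodule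
and satisfies `ρ(I)(A)L ⊆ I`. -/
def IsIdealL (I : Submodule F L) : Prop :=
  (∀ (x : L), ∀ y ∈ I, ⁅x, y⁆ ∈ I) ∧ (∀ (a : A), ∀ y ∈ I, a • y ∈ I) ∧
  (∀ v ∈ I, ∀ (a : A) (w : L), (𝔏.ρ v a) • w ∈ I)

/-- A graded submodule of `L`. -/
def IsGradedL (I : Submodule F L) : Prop := I = ⨆ k : G, I ⊓ 𝔏.𝓛 k

/-- A graded ideal of `(L,A)`. -/
def IsGradedIdealL (I : Submodule F L) : Prop := 𝔏.IsIdealL I ∧ 𝔏.IsGradedL I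

/-- `(L,A)` is gr-simple. -/
def GrSimpleL : Prop :=
  (∃ v w : L, ⁅v, w⁆ ≠ 0) ∧ (∃ a b : A, a * b ≠ 0) ∧ (∃ (a : A) (v : L), a • v ≠ 0) ∧
  ∀ I : Submodule F L, 𝔏.IsGradedIdealL I → I = ⊥ ∨ I = ⊤ ∨ I = LinearMap.ker 𝔏.ρ

/-- The span of products `A_h · A_g`. -/
def mulSub (h g : G) : Submodule F A :=
  Submodule.span F {x | ∃ a ∈ 𝔏.𝓐 h, ∃ b ∈ 𝔏.𝓐 g, x = a * b}

/-- The span of `ρ(L_h)(A_g)`. -/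
def rhoSub (h g : G) : Submodule F A :=
  Submodule.span F {x | ∃ v ∈ 𝔏.𝓛 h, ∃ a ∈ 𝔏.𝓐 g, x = 𝔏.ρ v a}

/-- `A_{[g],1}`. -/
def A1class (g : G) : Submodule F A :=
  (⨆ g' ∈ {g' | g' ∈ 𝔏.SuppA ∧ 𝔏.LambdaConnected g g' ∧ g' ∈ 𝔏.SuppL}, 𝔏.rhoSub g'⁻¹ g') ⊔
  (⨆ g' ∈ {g' | g' ∈ 𝔏.SuppA ∧ 𝔏.LambdaConnected g g'}, 𝔏.mulSub g'⁻¹ g')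

/-- `A_{[g]}`. -/
def Aclass (g : G) : Submodule F A :=
  ⨆ g' ∈ {g' | g' ∈ 𝔏.SuppA ∧ 𝔏.LambdaConnected g g'}, 𝔏.𝓐 g'

/-- `𝒜_{[g]} = A_{[g],1} ⊕ A_{[g]}`. -/
def calA (g : G) : Submodule F A := 𝔏.A1class g ⊔ 𝔏.Aclass g

/-- `Σ_{g ∈ Λ_G ∩ Σ_G} ρ(L_{g⁻¹})(A_g) + Σ_{g ∈ Λ_G} A_{g⁻¹} A_g`. -/
def A1full : Submodule F A :=
  (⨆ g ∈ 𝔏.SuppA ∩ 𝔏.SuppL, 𝔏.rhoSub g⁻¹ g) ⊔ (⨆ g ∈ 𝔏.SuppA, 𝔏.mulSub g⁻¹ g)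

/-- An ideal of the commutative associative algebra `A`. -/
def IsIdealA (I : Submodule F A) : Prop := ∀ (a : A), ∀ x ∈ I, a * x ∈ I

/-- A graded submodule of `A`. -/
def IsGradedA (I : Submodule F A) : Prop := I = ⨆ k : G, I ⊓ 𝔏.𝓐 k

/-- A graded ideal of `A`. -/
def IsGradedIdealA (I : Submodule F A) : Prop := IsIdealA I ∧ 𝔏.IsGradedA I

/-- `A` is gr-simple. -/
def GrSimpleA : Prop :=
  (∃ a b : A, a * b ≠ 0) ∧
  ∀ I : Submodule F A, 𝔏.IsGradedIdealA I → I = ⊥ ∨ I = ⊤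

/-- The graded Lie-Rinehart algebra `(L,A)` is tight. -/
def Tight : Prop :=
  (∀ v : L, (∀ w : L, ⁅v, w⁆ = 0) → 𝔏.ρ v = 0 → v = 0) ∧
  (∀ v : L, (∀ a : A, a • v = 0) → v = 0) ∧
  (∀ a : A, (∀ b : A, a * b = 0) → a = 0) ∧
  Submodule.span F {x : A | ∃ b c : A, x = b * c} = ⊤ ∧
  Submodule.span F {x : L | ∃ (a : A) (w : L), x = a • w} = ⊤ ∧
  𝔏.𝓛 1 = 𝔏.L1full ∧ 𝔏.𝓐 1 = 𝔏.A1full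

/-- `(L,A)` is of maximal length. -/
def MaximalLength : Prop :=
  (∀ g ∈ 𝔏.SuppL, Module.rank F (𝔏.𝓛 g) = 1) ∧ (∀ k ∈ 𝔏.SuppA, Module.rank F (𝔏.𝓐 k) = 1)

/-- `(L,A)` is `G`-multiplicative. -/
def GMultiplicative : Prop :=
  (∀ g ∈ 𝔏.SuppL, ∀ h ∈ 𝔏.SuppL, g * h ∈ 𝔏.SuppL → ∃ v ∈ 𝔏.𝓛 g, ∃ w ∈ 𝔏.𝓛 h, ⁅v, w⁆ ≠ 0) ∧
  (∀ k ∈ 𝔏.SuppA, ∀ g ∈ 𝔏.SuppL, k * g ∈ 𝔏.SuppL → ∃ a ∈ 𝔏.𝓐 k, ∃ v ∈ 𝔏.𝓛 g, a • v ≠ 0) ∧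
  (∀ k ∈ 𝔏.SuppA, ∀ j ∈ 𝔏.SuppA, k * j ∈ 𝔏.SuppA → ∃ a ∈ 𝔏.𝓐 k, ∃ b ∈ 𝔏.𝓐 j, a * b ≠ 0)

/-- A gr-simple ideal of `(L,A)`: a graded ideal with nonzero bracket whose only graded
ideals of `L` contained in it are `0`, itself and its intersection with `Ker ρ`. -/
def GrSimpleIdealL (I : Submodule F L) : Prop :=
  𝔏.IsGradedIdealL I ∧ (∃ x ∈ I, ∃ y ∈ I, ⁅x, y⁆ ≠ 0) ∧
  ∀ J : Submodule F L, 𝔏.IsGradedIdealL J → J ≤ I →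
    (J = ⊥ ∨ J = I ∨ J = LinearMap.ker 𝔏.ρ ⊓ I)

end GradedLieRinehart

open GradedLieRinehart

variable {F : Type*} [Field F] {G : Type*} [CommGroup G] [DecidableEq G]
  {A : Type*} [CommRing A] [Algebra F A]
  {L : Type*} [LieRing L] [LieAlgebra F L] [Module A L] [IsScalarTower F A L]

section ReachAux

variable {G : Type*} [CommGroup G] {M O : Set G}

/-- Auxiliary reachability relation: there is a chain from `g` whose partial products
(including the last) all lie in `M` and whose total product is `p`. -/
inductive Reach (M O : Set G) (g : G) : G → Prop
  | base (hg : g ∈ M) : Reach M O g g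
  | step {p : G} (k : G) (h : Reach M O g p) (hk : k ∈ M ∪ O) (hpk : p * k ∈ M) :
      Reach M O g (p * k)

lemma Reach.memM {g p : G} (h : Reach M O g p) : p ∈ M := by
  induction h with
  | base hg => exact hg
  | step k h hk hpk ih => exact hpk

lemma Reach.startM {g p : G} (h : Reach M O g p) : g ∈ M := by
  induction h with
  | base hg => exact hg
  | step k h hk hpk ih => exact ih

lemma Reach.trans {g p q : G} (h1 : Reach M O g p) (h2 : Reach M O p q) :
    Reach M O g q := by
  induction h2 with
  | base _ => exact h1
  | step k h hk hpk ih => exact Reach.step k ih hk hpk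

lemma Reach.symm (hM : ∀ x ∈ M, x⁻¹ ∈ M) (hO : ∀ x ∈ O, x⁻¹ ∈ O)
    {g p : G} (h : Reach M O g p) : Reach M O p g := by
  induction h with
  | base hg => exact Reach.base hg
  | @step p' k h hk hpk ih =>
      refine Reach.trans ?_ ih
      have hk' : k⁻¹ ∈ M ∪ O := by
        rcases hk with hk | hk
        · exact Or.inl (hM _ hk)
        · exact Or.inr (hO _ hk)
      have := Reach.step (M := M) (O := O) (g := p' * k) k⁻¹ (Reach.base hpk) hk'
        (by simpa using h.memM)
      simpa using this

lemma Reach.inv (hM : ∀ x ∈ M, x⁻¹ ∈ M) (hO : ∀ x ∈ O, x⁻¹ ∈ O)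
    {g p : G} (h : Reach M O g p) : Reach M O g⁻¹ p⁻¹ := by
  induction h with
  | base hg => exact Reach.base (hM _ hg)
  | @step p' k h hk hpk ih =>
      have hk' : k⁻¹ ∈ M ∪ O := by
        rcases hk with hk | hk
        · exact Or.inl (hM _ hk)
        · exact Or.inr (hO _ hk)
      have := Reach.step (M := M) (O := O) k⁻¹ ih hk' (by simpa [mul_inv, mul_comm] using hM _ hpk)
      simpa [mul_inv, mul_comm] using this

lemma chain_to_reach : ∀ (c : List G), c ≠ [] → ∀ g : G, c.head? = some g →
    (∀ k ∈ c, k ∈ M ∪ O) → (∀ i : ℕ, 0 < i → i < c.length → (c.take i).prod ∈ M) →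
    c.prod ∈ M → Reach M O g c.prod := by
  intro c
  induction c using List.reverseRecOn with
  | nil => intro h; exact absurd rfl h
  | append_singleton l k ih =>
    intro _ g hhead hmem hpartial hprod
    rcases eq_or_ne l [] with rfl | hl
    · simp only [List.nil_append, List.head?_cons, Option.some.injEq] at hhead
      subst hhead
      simpa using Reach.base (M := M) (O := O) (by simpa using hprod)
    · have hhead' : l.head? = some g := by
        rwa [List.head?_append_of_ne_nil _ hl] at hhead
      have hlen : 0 < l.length := List.length_pos_iff.mpr hl
      have hmem' : ∀ x ∈ l, x ∈ M ∪ O := fun x hx =>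
        hmem x (List.mem_append_left _ hx)
      have hpartial' : ∀ i : ℕ, 0 < i → i < l.length → (l.take i).prod ∈ M := by
        intro i hi hil
        have := hpartial i hi (by simp; omega)
        rwa [List.take_append_of_le_length (le_of_lt hil)] at this
      have hlprod : l.prod ∈ M := by
        have := hpartial l.length hlen (by simp)
        rwa [List.take_left] at this
      have hreach := ih hl g hhead' hmem' hpartial' hlprod
      have hk : k ∈ M ∪ O := hmem k (by simp)
      have := Reach.step (M := M) (O := O) k hreach hk (by simpa using hprod)
      simpa using this

lemma reach_to_chain {g p : G} (h : Reach M O g p) :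
    ∃ c : List G, c ≠ [] ∧ c.head? = some g ∧ (∀ k ∈ c, k ∈ M ∪ O) ∧
      (∀ i : ℕ, 0 < i → i < c.length → (c.take i).prod ∈ M) ∧ c.prod = p := by
  induction h with
  | base hg =>
      refine ⟨[g], by simp, by simp, by simpa using Or.inl hg, ?_, by simp⟩
      intro i hi hil
      simp at hil
      omega
  | @step p' k h hk hpk ih =>
      obtain ⟨c, hne, hhead, hmem, hpart, hprodeq⟩ := ih
      refine ⟨c ++ [k], by simp, ?_, ?_, ?_, by simp [hprodeq]⟩
      · rwa [List.head?_append_of_ne_nil _ hne]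
      · intro x hx
        rcases List.mem_append.mp hx with hx | hx
        · exact hmem x hx
        · simp at hx; subst hx; exact hk
      · intro i hi hil
        simp at hil
        rcases lt_or_eq_of_le hil with hlt | heq
        · rw [List.take_append_of_le_length (le_of_lt hlt)]
          exact hpart i hi hlt
        · subst heq
          rw [List.take_left, hprodeq]
          exact h.memM

end ReachAux

/-- The Σ_G-connection relation on Σ_G is an equivalence relation. -/
theorem sigmaConnected_equivalence (𝔏 : GradedLieRinehart F G A L) :
    Equivalence (fun g g' : {x : G // x ∈ 𝔏.SuppL} => 𝔏.SigmaConnected g.1 g'.1) := by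
  have hM : ∀ x ∈ 𝔏.Spm, x⁻¹ ∈ 𝔏.Spm := by
    intro x hx
    rcases hx with hx | hx
    · exact Or.inr (by simpa using hx)
    · exact Or.inl hx
  have hO : ∀ x ∈ 𝔏.Lpm, x⁻¹ ∈ 𝔏.Lpm := by
    intro x hx
    rcases hx with hx | hx
    · exact Or.inr (by simpa using hx)
    · exact Or.inl hx
  have hsub : ∀ x ∈ 𝔏.SuppL, x ∈ 𝔏.Spm := fun x hx => Or.inl hx
  -- characterization of SigmaConnected in terms of Reach
  have hfwd : ∀ g g' : G, g' ∈ 𝔏.SuppL → 𝔏.SigmaConnected g g' →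
      Reach 𝔏.Spm 𝔏.Lpm g g' ∨ Reach 𝔏.Spm 𝔏.Lpm g g'⁻¹ := by
    intro g g' hg' ⟨c, hne, hhead, hmem, hpart, hprod⟩
    have hprodM : c.prod ∈ 𝔏.Spm := by
      rcases hprod with h | h
      · rw [h]; exact hsub _ hg'
      · rw [h]; exact hM _ (hsub _ hg')
    have hr := chain_to_reach c hne g hhead hmem hpart hprodM
    rcases hprod with h | h
    · exact Or.inl (h ▸ hr)
    · exact Or.inr (h ▸ hr)
  have hbwd : ∀ g g' : G, (Reach 𝔏.Spm 𝔏.Lpm g g' ∨ Reach 𝔏.Spm 𝔏.Lpm g g'⁻¹) →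
      𝔏.SigmaConnected g g' := by
    intro g g' hr
    rcases hr with hr | hr
    · obtain ⟨c, h1, h2, h3, h4, h5⟩ := reach_to_chain hr
      exact ⟨c, h1, h2, h3, h4, Or.inl h5⟩
    · obtain ⟨c, h1, h2, h3, h4, h5⟩ := reach_to_chain hr
      exact ⟨c, h1, h2, h3, h4, Or.inr h5⟩
  constructor
  · intro g
    exact hbwd g.1 g.1 (Or.inl (Reach.base (hsub _ g.2)))
  · intro g g' h
    rcases hfwd g.1 g'.1 g'.2 h with hr | hr
    · exact hbwd g'.1 g.1 (Or.inl (hr.symm hM hO))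
    · exact hbwd g'.1 g.1 (Or.inr (by simpa using (hr.symm hM hO).inv hM hO))
  · intro g g' g'' h1 h2
    rcases hfwd g.1 g'.1 g'.2 h1 with hr1 | hr1 <;>
      rcases hfwd g'.1 g''.1 g''.2 h2 with hr2 | hr2
    · exact hbwd g.1 g''.1 (Or.inl (hr1.trans hr2))
    · exact hbwd g.1 g''.1 (Or.inr (hr1.trans hr2))
    · exact hbwd g.1 g''.1 (Or.inr (hr1.trans (by simpa using hr2.inv hM hO)))
    · exact hbwd g.1 g''.1 (Or.inl (hr1.trans (by simpa using hr2.inv hM hO)))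
end

section
/- For any equivalence class [g] ∈ Σ_G/~, the subspace I_{[g]} := L_{[g],1} ⊕ V_{[g]} satisfies [I_{[g]}, I_{[g]}] ⊆ I_{[g]}. -/
open Submodule

open GradedLieRinehart

variable {F : Type*} [Field F] {G : Type*} [CommGroup G] [DecidableEq G]
  {A : Type*} [CommRing A] [Algebra F A]
  {L : Type*} [LieRing L] [LieAlgebra F L] [Module A L] [IsScalarTower F A L]

/-!
Every element of `L_{[g],1}` has degree `1`, and bracketing with an element `x` of degree `1`
preserves each `𝓛 k`, each `[L_h, L_k]` (Jacobi) and each `A_h L_k` (Leibniz rule, `ρ x` being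
of degree `1`); hence `L_{[g],1}` and `V_{[g]}` are both stable under `ad x`. For homogeneous
`x ∈ 𝓛 g'`, `y ∈ 𝓛 g''` in `V_{[g]}`, the bracket lies in `[L_{g''⁻¹}, L_{g''}] ⊆ L_{[g],1}` if
`g' g'' = 1`, vanishes if `g' g''` is outside the support, and otherwise has a degree that is
connected to `g` by appending `g''` to a connection from `g` to `g'`.
-/

section ChainConnected

variable {G : Type*} [CommGroup G] {Main Other : Set G}

theorem ChainConnected.mul {g g' k : G} (h : ChainConnected Main Other g g')
    (hg' : g' ∈ Main) (hg'_inv : g'⁻¹ ∈ Main) (hk : k ∈ Main) (hk_inv : k⁻¹ ∈ Main) :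
    ChainConnected Main Other g (g' * k) := by
  obtain ⟨c, hne, hhead, hmem, hpart, hprod⟩ := h
  obtain ⟨m, hm, hc, hcm⟩ : ∃ m ∈ Main, c.prod ∈ Main ∧
      (c.prod * m = g' * k ∨ c.prod * m = (g' * k)⁻¹) := by
    rcases hprod with hp | hp <;> rw [hp]
    · exact ⟨k, hk, hg', Or.inl rfl⟩
    · exact ⟨k⁻¹, hk_inv, hg'_inv, Or.inr (mul_inv g' k).symm⟩
  refine ⟨c ++ [m], by simp, by rwa [List.head?_append_of_ne_nil _ hne], ?_, ?_,
    by rwa [List.prod_append, List.prod_singleton]⟩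
  · simp only [List.mem_append, List.mem_singleton]
    rintro x (hx | rfl)
    exacts [hmem x hx, Or.inl hm]
  · intro i hi hlen
    rw [List.length_append, List.length_singleton, Nat.lt_succ_iff] at hlen
    rcases hlen.lt_or_eq with hlt | rfl
    · rw [List.take_append_of_le_length hlt.le]
      exact hpart i hi hlt
    · rwa [List.take_append_of_le_length le_rfl, List.take_length]

end ChainConnected

section LieBracket

variable {R M : Type*} [CommRing R] [LieRing M] [LieAlgebra R M] {x : M} {T : Submodule R M}

theorem lie_mem_span_of_forall {s : Set M} (h : ∀ z ∈ s, ⁅x, z⁆ ∈ T) {y : M}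
    (hy : y ∈ span R s) : ⁅x, y⁆ ∈ T := by
  induction hy using Submodule.span_induction with
  | mem z hz => exact h z hz
  | zero => simp
  | add _ _ _ _ h₁ h₂ => rw [lie_add]; exact add_mem h₁ h₂
  | smul c _ _ h => rw [lie_smul]; exact T.smul_mem c h

theorem lie_mem_sup {S S' : Submodule R M} (h : ∀ y ∈ S, ⁅x, y⁆ ∈ S)
    (h' : ∀ y ∈ S', ⁅x, y⁆ ∈ S') {y : M} (hy : y ∈ S ⊔ S') : ⁅x, y⁆ ∈ S ⊔ S' := by
  obtain ⟨y₁, hy₁, y₂, hy₂, rfl⟩ := mem_sup.1 hy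
  rw [lie_add]
  exact add_mem (mem_sup_left (h y₁ hy₁)) (mem_sup_right (h' y₂ hy₂))

theorem lie_mem_biSup_of_forall {ι : Type*} {s : Set ι} {S : ι → Submodule R M}
    (h : ∀ i ∈ s, ∀ y ∈ S i, ⁅x, y⁆ ∈ T) {y : M} (hy : y ∈ ⨆ i ∈ s, S i) : ⁅x, y⁆ ∈ T := by
  have hle : (⨆ i ∈ s, S i) ≤ T.comap (LieAlgebra.ad R M x) :=
    iSup₂_le fun i hi z hz => by simpa using h i hi z hz
  simpa using hle hy

theorem lie_mem_biSup {ι : Type*} {s : Set ι} {S : ι → Submodule R M}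
    (h : ∀ i ∈ s, ∀ y ∈ S i, ⁅x, y⁆ ∈ S i) {y : M} (hy : y ∈ ⨆ i ∈ s, S i) :
    ⁅x, y⁆ ∈ ⨆ i ∈ s, S i :=
  lie_mem_biSup_of_forall (fun i hi z hz => le_iSup₂ (f := fun i _ => S i) i hi (h i hi z hz)) hy

theorem lie_mem_of_lie_mem_swap {y : M} (h : ⁅y, x⁆ ∈ T) : ⁅x, y⁆ ∈ T := by
  rw [← lie_skew]
  exact neg_mem h

theorem forall_lie_mem_sup {S S' I : Submodule R M} (hSS : ∀ x ∈ S, ∀ y ∈ S, ⁅x, y⁆ ∈ I)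
    (hSS' : ∀ x ∈ S, ∀ y ∈ S', ⁅x, y⁆ ∈ I) (hS'S' : ∀ x ∈ S', ∀ y ∈ S', ⁅x, y⁆ ∈ I) :
    ∀ x ∈ S ⊔ S', ∀ y ∈ S ⊔ S', ⁅x, y⁆ ∈ I := by
  intro x hx y hy
  obtain ⟨x₁, hx₁, x₂, hx₂, rfl⟩ := mem_sup.1 hx
  obtain ⟨y₁, hy₁, y₂, hy₂, rfl⟩ := mem_sup.1 hy
  rw [add_lie, lie_add, lie_add]
  exact add_mem (add_mem (hSS _ hx₁ _ hy₁) (hSS' _ hx₁ _ hy₂))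
    (add_mem (lie_mem_of_lie_mem_swap (hSS' _ hy₁ _ hx₂)) (hS'S' _ hx₂ _ hy₂))

end LieBracket

namespace GradedLieRinehart

variable (𝔏 : GradedLieRinehart F G A L)

theorem sigmaConnected_mul {g g' k : G} (h : 𝔏.SigmaConnected g g') (hg' : g' ∈ 𝔏.SuppL)
    (hk : k ∈ 𝔏.SuppL) : 𝔏.SigmaConnected g (g' * k) :=
  h.mul (Or.inl hg') (Or.inr (by rwa [inv_inv])) (Or.inl hk) (Or.inr (by rwa [inv_inv]))

theorem smulSub_le (h k : G) : 𝔏.smulSub h k ≤ 𝔏.𝓛 (h * k) := by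
  rw [smulSub, span_le]
  rintro _ ⟨a, ha, v, hv, rfl⟩
  exact 𝔏.smul_mem ha hv

theorem bracketSub_le (h k : G) : 𝔏.bracketSub h k ≤ 𝔏.𝓛 (h * k) := by
  rw [bracketSub, span_le]
  rintro _ ⟨v, hv, w, hw, rfl⟩
  exact 𝔏.bracket_mem hv hw

theorem L1class_le (g : G) : 𝔏.L1class g ≤ 𝔏.𝓛 1 :=
  sup_le (iSup₂_le fun g' _ => by simpa using 𝔏.smulSub_le g'⁻¹ g')
    (iSup₂_le fun g' _ => by simpa using 𝔏.bracketSub_le g'⁻¹ g')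

section DegreeOne

variable {𝔏} {x : L} (hx : x ∈ 𝔏.𝓛 1)
include hx

theorem lie_mem_of_mem_one {k : G} {v : L} (hv : v ∈ 𝔏.𝓛 k) : ⁅x, v⁆ ∈ 𝔏.𝓛 k := by
  simpa using 𝔏.bracket_mem hx hv

theorem rho_mem_of_mem_one {k : G} {a : A} (ha : a ∈ 𝔏.𝓐 k) : 𝔏.ρ x a ∈ 𝔏.𝓐 k := by
  simpa using 𝔏.rho_mem hx ha

theorem lie_mem_smulSub {h k : G} {y : L} (hy : y ∈ 𝔏.smulSub h k) :
    ⁅x, y⁆ ∈ 𝔏.smulSub h k := by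
  refine lie_mem_span_of_forall ?_ hy
  rintro _ ⟨a, ha, v, hv, rfl⟩
  rw [𝔏.leibniz]
  exact add_mem (subset_span ⟨a, ha, _, lie_mem_of_mem_one hx hv, rfl⟩)
    (subset_span ⟨_, rho_mem_of_mem_one hx ha, v, hv, rfl⟩)

theorem lie_mem_bracketSub {h k : G} {y : L} (hy : y ∈ 𝔏.bracketSub h k) :
    ⁅x, y⁆ ∈ 𝔏.bracketSub h k := by
  refine lie_mem_span_of_forall ?_ hy
  rintro _ ⟨v, hv, w, hw, rfl⟩
  rw [leibniz_lie]
  exact add_mem (subset_span ⟨_, lie_mem_of_mem_one hx hv, w, hw, rfl⟩)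
    (subset_span ⟨v, hv, _, lie_mem_of_mem_one hx hw, rfl⟩)

theorem lie_mem_L1class {g : G} {y : L} (hy : y ∈ 𝔏.L1class g) : ⁅x, y⁆ ∈ 𝔏.L1class g :=
  lie_mem_sup (fun _ => lie_mem_biSup fun _ _ _ => lie_mem_smulSub hx)
    (fun _ => lie_mem_biSup fun _ _ _ => lie_mem_bracketSub hx) hy

theorem lie_mem_Vclass {g : G} {y : L} (hy : y ∈ 𝔏.Vclass g) : ⁅x, y⁆ ∈ 𝔏.Vclass g :=
  lie_mem_biSup (fun _ _ _ => lie_mem_of_mem_one hx) hy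

end DegreeOne

theorem lie_mem_Iclass_of_homogeneous {g g' g'' : G}
    (hg' : g' ∈ 𝔏.SuppL ∧ 𝔏.SigmaConnected g g') (hg'' : g'' ∈ 𝔏.SuppL ∧ 𝔏.SigmaConnected g g'')
    {x y : L} (hx : x ∈ 𝔏.𝓛 g') (hy : y ∈ 𝔏.𝓛 g'') : ⁅x, y⁆ ∈ 𝔏.Iclass g := by
  by_cases hinv : g' * g'' = 1
  · rw [← inv_eq_of_mul_eq_one_left hinv] at hx
    have hmem : ⁅x, y⁆ ∈ 𝔏.bracketSub g''⁻¹ g'' := subset_span ⟨x, hx, y, hy, rfl⟩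
    exact mem_sup_left (mem_sup_right
      (le_iSup₂ (f := fun g' _ => 𝔏.bracketSub g'⁻¹ g') g'' hg'' hmem))
  have hxy := 𝔏.bracket_mem hx hy
  by_cases hbot : 𝔏.𝓛 (g' * g'') = ⊥
  · rw [hbot, mem_bot] at hxy
    rw [hxy]
    exact zero_mem _
  exact mem_sup_right (le_iSup₂ (f := fun g' _ => 𝔏.𝓛 g') (g' * g'')
    ⟨⟨hinv, hbot⟩, 𝔏.sigmaConnected_mul hg'.2 hg'.1 hg''.1⟩ hxy)

theorem lie_mem_Iclass_of_mem_Vclass {g : G} :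
    ∀ x ∈ 𝔏.Vclass g, ∀ y ∈ 𝔏.Vclass g, ⁅x, y⁆ ∈ 𝔏.Iclass g :=
  fun _ hx _ hy => lie_mem_biSup_of_forall (fun _ hg'' _ hz => lie_mem_of_lie_mem_swap
    (lie_mem_biSup_of_forall (fun _ hg' _ hw =>
      𝔏.lie_mem_Iclass_of_homogeneous hg'' hg' hz hw) hx)) hy

end GradedLieRinehart

theorem Iclass_bracket_self_general (𝔏 : GradedLieRinehart F G A L) {g : G} :
    ∀ x ∈ 𝔏.Iclass g, ∀ y ∈ 𝔏.Iclass g, ⁅x, y⁆ ∈ 𝔏.Iclass g :=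
  forall_lie_mem_sup
    (fun _ hx _ hy => mem_sup_left (lie_mem_L1class (𝔏.L1class_le g hx) hy))
    (fun _ hx _ hy => mem_sup_right (lie_mem_Vclass (𝔏.L1class_le g hx) hy))
    𝔏.lie_mem_Iclass_of_mem_Vclass

/-- `[I_{[g]}, I_{[g]}] ⊆ I_{[g]}`. -/
theorem Iclass_bracket_self (𝔏 : GradedLieRinehart F G A L) {g : G} (hg : g ∈ 𝔏.SuppL) :
    ∀ x ∈ 𝔏.Iclass g, ∀ y ∈ 𝔏.Iclass g, ⁅x, y⁆ ∈ 𝔏.Iclass g :=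
  Iclass_bracket_self_general 𝔏
end

section
/- If [g], [h] ∈ Σ_G/~ are distinct equivalence classes, then [I_{[g]}, I_{[h]}] = 0. -/
open Submodule

open GradedLieRinehart

variable {F : Type*} [Field F] {G : Type*} [CommGroup G] [DecidableEq G]
  {A : Type*} [CommRing A] [Algebra F A]
  {L : Type*} [LieRing L] [LieAlgebra F L] [Module A L] [IsScalarTower F A L]

/-!
Restricted to `Σ_G`, `Σ_G`-connectedness is an equivalence relation; this is clearest after
reading a chain as a path built one entry at a time. For `p ∈ [g]` and
`q ∈ [h]`, a nonzero element of `[L_p, L_q] ⊆ L_{pq}` or of `ρ(L_p)(A_{q⁻¹}) ⊆ A_{pq⁻¹}` would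
connect `p` to `q`, so both vanish. By the Leibniz rule the sets `L_p ∪ A_{p⁻¹} L_p` for
`p ∈ [g]` then commute elementwise with those for `p ∈ [h]`, hence so do the Lie subalgebras
they generate, and these contain `I_{[g]}` and `I_{[h]}`.
-/

section Chains

variable {G : Type*} [CommGroup G] {M O : Set G} {a b x z : G}

/-- The chains of `ChainConnected M O a`, built one entry at a time and indexed by their
exact product. -/
inductive ChainReach (M O : Set G) (a : G) : G → Prop
  | refl : a ∈ M ∪ O → ChainReach M O a a
  | tail {y k : G} : ChainReach M O a y → y ∈ M → k ∈ M ∪ O → ChainReach M O a (y * k)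

theorem ChainReach.exists_list (h : ChainReach M O a x) :
    ∃ c : List G, c ≠ [] ∧ c.head? = some a ∧ (∀ k ∈ c, k ∈ M ∪ O) ∧
      (∀ i : ℕ, 0 < i → i < c.length → (c.take i).prod ∈ M) ∧ c.prod = x := by
  induction h with
  | refl ha =>
    exact ⟨[a], by simp, rfl, by simpa using ha, fun i _ _ => by simp at *; omega, by simp⟩
  | @tail y k _ hy hk ih =>
    obtain ⟨c, hc, hhead, hmem, hpart, rfl⟩ := ih
    refine ⟨c ++ [k], by simp, by rw [List.head?_append_of_ne_nil _ hc, hhead], ?_, ?_, by simp⟩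
    · intro j hj
      rcases List.mem_append.1 hj with hj | hj
      · exact hmem j hj
      · rwa [List.mem_singleton.1 hj]
    · intro i hi hlen
      rw [List.length_append, List.length_singleton] at hlen
      rcases Nat.lt_succ_iff_lt_or_eq.1 hlen with hlt | rfl
      · rw [List.take_append_of_le_length hlt.le]
        exact hpart i hi hlt
      · rwa [List.take_left' rfl]

theorem chainReach_of_list (c : List G) (hc : c ≠ []) (hhead : c.head? = some a)
    (hmem : ∀ k ∈ c, k ∈ M ∪ O) (hpart : ∀ i : ℕ, 0 < i → i < c.length → (c.take i).prod ∈ M) :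
    ChainReach M O a c.prod := by
  induction c using List.reverseRecOn with
  | nil => exact absurd rfl hc
  | append_singleton c k ih =>
    have hk : k ∈ M ∪ O := hmem k (by simp)
    rcases eq_or_ne c [] with rfl | hc'
    · obtain rfl : k = a := by simpa using hhead
      simpa using ChainReach.refl hk
    have hprefix : ∀ i ≤ c.length, ((c ++ [k]).take i).prod = (c.take i).prod := fun i hi => by
      rw [List.take_append_of_le_length hi]
    have hprod : c.prod ∈ M := by
      simpa [hprefix] using hpart c.length (List.length_pos_iff.2 hc') (by simp)
    rw [List.prod_append, List.prod_singleton]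
    refine ChainReach.tail (ih hc' ?_ ?_ ?_) hprod hk
    · rwa [List.head?_append_of_ne_nil _ hc'] at hhead
    · exact fun j hj => hmem j (List.mem_append_left _ hj)
    · intro i hi hlen
      rw [← hprefix i hlen.le]
      exact hpart i hi (by simp; omega)

theorem chainConnected_iff_chainReach :
    ChainConnected M O a b ↔ ChainReach M O a b ∨ ChainReach M O a b⁻¹ := by
  constructor
  · rintro ⟨c, hc, hhead, hmem, hpart, hprod⟩
    have h := chainReach_of_list c hc hhead hmem hpart
    rcases hprod with hprod | hprod <;> rw [hprod] at h
    exacts [Or.inl h, Or.inr h]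
  · rintro (h | h) <;> obtain ⟨c, hc, hhead, hmem, hpart, hprod⟩ := h.exists_list
    exacts [⟨c, hc, hhead, hmem, hpart, Or.inl hprod⟩, ⟨c, hc, hhead, hmem, hpart, Or.inr hprod⟩]

theorem ChainReach.trans (h₁ : ChainReach M O a b) (h₂ : ChainReach M O b z) :
    ChainReach M O a z := by
  induction h₂ with
  | refl => exact h₁
  | tail _ hy hk ih => exact ih.tail hy hk

theorem ChainReach.inv (hM : ∀ x ∈ M, x⁻¹ ∈ M) (hMO : ∀ x ∈ M ∪ O, x⁻¹ ∈ M ∪ O)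
    (h : ChainReach M O a x) : ChainReach M O a⁻¹ x⁻¹ := by
  induction h with
  | refl ha => exact .refl (hMO a ha)
  | tail _ hy hk ih => simpa [mul_comm] using ih.tail (hM _ hy) (hMO _ hk)

theorem ChainReach.symm (hMO : ∀ x ∈ M ∪ O, x⁻¹ ∈ M ∪ O) (h : ChainReach M O a x)
    (hx : x ∈ M) : ChainReach M O x a := by
  induction h with
  | refl ha => exact .refl ha
  | @tail y k _ hy hk ih =>
    have hback : ChainReach M O (y * k) y := by
      simpa using (ChainReach.refl (Or.inl hx)).tail hx (hMO k hk)
    exact hback.trans (ih hy)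

namespace ChainConnected

theorem refl (ha : a ∈ M ∪ O) : ChainConnected M O a a :=
  chainConnected_iff_chainReach.2 (Or.inl (.refl ha))

theorem inv_right (h : ChainConnected M O a b) : ChainConnected M O a b⁻¹ := by
  rw [chainConnected_iff_chainReach, inv_inv] at *
  exact h.symm

theorem mul_right {k : G} (ha : a ∈ M) (hk : k ∈ M ∪ O) : ChainConnected M O a (a * k) :=
  chainConnected_iff_chainReach.2 (Or.inl ((ChainReach.refl (Or.inl ha)).tail ha hk))

variable (hM : ∀ x ∈ M, x⁻¹ ∈ M) (hMO : ∀ x ∈ M ∪ O, x⁻¹ ∈ M ∪ O)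
include hM hMO

theorem symm (hb : b ∈ M) (h : ChainConnected M O a b) : ChainConnected M O b a := by
  rw [chainConnected_iff_chainReach] at *
  rcases h with h | h
  · exact Or.inl (h.symm hMO hb)
  · simpa using Or.inr ((h.symm hMO (hM b hb)).inv hM hMO)

theorem trans (h₁ : ChainConnected M O a b) (h₂ : ChainConnected M O b z) :
    ChainConnected M O a z := by
  rw [chainConnected_iff_chainReach] at *
  rcases h₁ with h₁ | h₁
  · exact h₂.imp h₁.trans h₁.trans
  · rcases h₂ with h₂ | h₂
    · exact Or.inr (h₁.trans (h₂.inv hM hMO))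
    · simpa using Or.inl (h₁.trans (h₂.inv hM hMO))

end ChainConnected

end Chains

section LieSpan

variable {R L : Type*} [CommRing R] [LieRing L] [LieAlgebra R L] {s t : Set L}

theorem lie_eq_zero_of_mem_lieSpan_left {y : L} (h : ∀ x ∈ s, ⁅x, y⁆ = 0) {x : L}
    (hx : x ∈ LieSubalgebra.lieSpan R L s) : ⁅x, y⁆ = 0 := by
  induction hx using LieSubalgebra.lieSpan_induction with
  | mem x hx => exact h x hx
  | zero => exact zero_lie y
  | add _ _ _ _ h₁ h₂ => rw [add_lie, h₁, h₂, add_zero]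
  | smul r _ _ h₁ => rw [smul_lie, h₁, smul_zero]
  | lie _ _ _ _ h₁ h₂ => rw [lie_lie, h₁, h₂, lie_zero, lie_zero, sub_zero]

theorem lie_eq_zero_of_mem_lieSpan (h : ∀ x ∈ s, ∀ y ∈ t, ⁅x, y⁆ = 0) {x y : L}
    (hx : x ∈ LieSubalgebra.lieSpan R L s) (hy : y ∈ LieSubalgebra.lieSpan R L t) :
    ⁅x, y⁆ = 0 := by
  refine lie_eq_zero_of_mem_lieSpan_left (fun x' hx' => ?_) hx
  rw [← lie_skew, neg_eq_zero]
  exact lie_eq_zero_of_mem_lieSpan_left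
    (fun y' hy' => by rw [← lie_skew, h x' hx' y' hy', neg_zero]) hy

end LieSpan

namespace GradedLieRinehart

variable {𝔏 : GradedLieRinehart F G A L} {g h p q : G}

theorem inv_mem_Spm {x : G} (hx : x ∈ 𝔏.Spm) : x⁻¹ ∈ 𝔏.Spm := by
  simpa [Spm, or_comm] using hx

theorem inv_mem_Spm_union_Lpm {x : G} (hx : x ∈ 𝔏.Spm ∪ 𝔏.Lpm) : x⁻¹ ∈ 𝔏.Spm ∪ 𝔏.Lpm := by
  simpa [Spm, Lpm, or_comm, or_left_comm] using hx

namespace SigmaConnected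

theorem refl (hp : p ∈ 𝔏.SuppL) : 𝔏.SigmaConnected p p :=
  ChainConnected.refl (Or.inl (Or.inl hp))

theorem inv_right (h : 𝔏.SigmaConnected p q) : 𝔏.SigmaConnected p q⁻¹ :=
  ChainConnected.inv_right h

theorem symm (hq : q ∈ 𝔏.SuppL) (h : 𝔏.SigmaConnected p q) : 𝔏.SigmaConnected q p :=
  ChainConnected.symm (fun _ => inv_mem_Spm) (fun _ => inv_mem_Spm_union_Lpm) (Or.inl hq) h

theorem trans {r : G} (h₁ : 𝔏.SigmaConnected p q) (h₂ : 𝔏.SigmaConnected q r) :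
    𝔏.SigmaConnected p r :=
  ChainConnected.trans (fun _ => inv_mem_Spm) (fun _ => inv_mem_Spm_union_Lpm) h₁ h₂

end SigmaConnected

theorem sigmaConnected_of_lie_ne_zero (hp : p ∈ 𝔏.SuppL) (hq : q ∈ 𝔏.SuppL) {v w : L}
    (hv : v ∈ 𝔏.𝓛 p) (hw : w ∈ 𝔏.𝓛 q) (hvw : ⁅v, w⁆ ≠ 0) : 𝔏.SigmaConnected p q := by
  by_cases hpq : p * q = 1
  · rw [eq_inv_of_mul_eq_one_right hpq]
    exact (SigmaConnected.refl hp).inv_right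
  have hpq' : p * q ∈ 𝔏.SuppL :=
    ⟨hpq, (𝔏.𝓛 (p * q)).ne_bot_iff.2 ⟨_, 𝔏.bracket_mem hv hw, hvw⟩⟩
  have hp_pq : 𝔏.SigmaConnected p (p * q) :=
    ChainConnected.mul_right (Or.inl hp) (Or.inl (Or.inl hq))
  have hq_pq : 𝔏.SigmaConnected q (p * q) := by
    rw [mul_comm]
    exact ChainConnected.mul_right (Or.inl hq) (Or.inl (Or.inl hp))
  exact hp_pq.trans (hq_pq.symm hpq')

theorem sigmaConnected_of_rho_ne_zero (hp : p ∈ 𝔏.SuppL) {v : L} {b : A}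
    (hv : v ∈ 𝔏.𝓛 p) (hb : b ∈ 𝔏.𝓐 q⁻¹) (hvb : 𝔏.ρ v b ≠ 0) : 𝔏.SigmaConnected p q := by
  by_cases hpq : p * q⁻¹ = 1
  · rw [← mul_inv_eq_one.1 hpq]
    exact SigmaConnected.refl hp
  -- the step from `p` to `q` is `p⁻¹ q`, whose inverse `p q⁻¹` lies in `Λ_G`
  have hpq' : p * q⁻¹ ∈ 𝔏.SuppA :=
    ⟨hpq, (𝔏.𝓐 (p * q⁻¹)).ne_bot_iff.2 ⟨_, 𝔏.rho_mem hv hb, hvb⟩⟩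
  have hstep : p⁻¹ * q ∈ 𝔏.Lpm := Or.inr (by simpa [mul_comm] using hpq')
  have h : 𝔏.SigmaConnected p (p * (p⁻¹ * q)) :=
    ChainConnected.mul_right (Or.inl hp) (Or.inr hstep)
  rwa [mul_inv_cancel_left] at h

/-- The class `[g] ∈ Σ_G/~`. -/
def sigmaClass (g : G) : Set G := {g' | g' ∈ 𝔏.SuppL ∧ 𝔏.SigmaConnected g g'}

theorem sigmaConnected_of_mem_sigmaClass (hp : p ∈ 𝔏.sigmaClass g) (hq : q ∈ 𝔏.sigmaClass h)
    (hpq : 𝔏.SigmaConnected p q) : 𝔏.SigmaConnected g h :=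
  hp.2.trans (hpq.trans (hq.2.symm hq.1))

theorem inv_mem_sigmaClass (hp : p ∈ 𝔏.sigmaClass g) (hL : 𝔏.𝓛 p⁻¹ ≠ ⊥) :
    p⁻¹ ∈ 𝔏.sigmaClass g :=
  ⟨⟨inv_ne_one.2 hp.1.1, hL⟩, hp.2.trans (SigmaConnected.refl hp.1).inv_right⟩

variable (𝔏) in
def generatorsAt (p : G) : Set L := 𝔏.𝓛 p ∪ {x | ∃ a ∈ 𝔏.𝓐 p⁻¹, ∃ v ∈ 𝔏.𝓛 p, x = a • v}

theorem Iclass_le_lieSpan (g : G) :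
    𝔏.Iclass g ≤
      (LieSubalgebra.lieSpan F L (⋃ p ∈ 𝔏.sigmaClass g, 𝔏.generatorsAt p)).toSubmodule := by
  have hgen : ∀ p ∈ 𝔏.sigmaClass g, ∀ x ∈ 𝔏.generatorsAt p,
      x ∈ LieSubalgebra.lieSpan F L (⋃ p ∈ 𝔏.sigmaClass g, 𝔏.generatorsAt p) :=
    fun p hp x hx => LieSubalgebra.subset_lieSpan (Set.mem_biUnion hp hx)
  refine sup_le (sup_le ?_ ?_) ?_
  · exact iSup₂_le fun p hp => span_le.2 fun x hx => hgen p ⟨hp.1, hp.2.1⟩ x (Or.inr hx)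
  · refine iSup₂_le fun p hp => span_le.2 ?_
    rintro _ ⟨t, ht, w, hw, rfl⟩
    rcases eq_or_ne t 0 with rfl | ht0
    · rw [zero_lie]
      exact zero_mem _
    exact LieSubalgebra.lie_mem _
      (hgen _ (inv_mem_sigmaClass hp ((𝔏.𝓛 p⁻¹).ne_bot_iff.2 ⟨t, ht, ht0⟩)) t (Or.inl ht))
      (hgen p hp w (Or.inl hw))
  · exact iSup₂_le fun p hp x hx => hgen p hp x (Or.inl hx)

variable (𝔏) in
theorem smul_lie (a : A) (v y : L) : ⁅a • v, y⁆ = a • ⁅v, y⁆ - 𝔏.ρ y a • v := by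
  rw [← lie_skew, 𝔏.leibniz, ← lie_skew y v, smul_neg]
  abel

section NotConnected

variable (hp : p ∈ 𝔏.SuppL) (hq : q ∈ 𝔏.SuppL) (hpq : ¬ 𝔏.SigmaConnected p q)
include hp hq hpq

theorem rho_eq_zero_of_mem_generatorsAt {y : L} (hy : y ∈ 𝔏.generatorsAt q) {a : A}
    (ha : a ∈ 𝔏.𝓐 p⁻¹) : 𝔏.ρ y a = 0 := by
  have hrho : ∀ w ∈ 𝔏.𝓛 q, 𝔏.ρ w a = 0 := fun w hw => by
    by_contra hwa
    exact hpq ((sigmaConnected_of_rho_ne_zero hq hw ha hwa).symm hp)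
  rcases hy with hy | ⟨b, -, w, hw, rfl⟩
  · exact hrho y hy
  · rw [𝔏.ρ_smul, hrho w hw, mul_zero]

theorem lie_eq_zero_of_mem_generatorsAt_right {v y : L} (hv : v ∈ 𝔏.𝓛 p)
    (hy : y ∈ 𝔏.generatorsAt q) : ⁅v, y⁆ = 0 := by
  have hlie : ∀ w ∈ 𝔏.𝓛 q, ⁅v, w⁆ = 0 := fun w hw => by
    by_contra hvw
    exact hpq (sigmaConnected_of_lie_ne_zero hp hq hv hw hvw)
  rcases hy with hy | ⟨b, hb, w, hw, rfl⟩
  · exact hlie y hy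
  · have hvb : 𝔏.ρ v b = 0 := by
      by_contra hvb
      exact hpq (sigmaConnected_of_rho_ne_zero hp hv hb hvb)
    rw [𝔏.leibniz, hlie w hw, hvb, smul_zero, zero_smul, add_zero]

theorem lie_eq_zero_of_mem_generatorsAt {x y : L} (hx : x ∈ 𝔏.generatorsAt p)
    (hy : y ∈ 𝔏.generatorsAt q) : ⁅x, y⁆ = 0 := by
  rcases hx with hx | ⟨a, ha, v, hv, rfl⟩
  · exact lie_eq_zero_of_mem_generatorsAt_right hp hq hpq hx hy
  · rw [𝔏.smul_lie, lie_eq_zero_of_mem_generatorsAt_right hp hq hpq hv hy,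
      rho_eq_zero_of_mem_generatorsAt hp hq hpq hy ha, smul_zero, zero_smul, sub_zero]

end NotConnected

end GradedLieRinehart

theorem Iclass_bracket_ne_general (𝔏 : GradedLieRinehart F G A L) {g h : G}
    (hne : ¬ 𝔏.SigmaConnected g h) :
    ∀ x ∈ 𝔏.Iclass g, ∀ y ∈ 𝔏.Iclass h, ⁅x, y⁆ = 0 := by
  intro x hx y hy
  refine lie_eq_zero_of_mem_lieSpan ?_ (𝔏.Iclass_le_lieSpan g hx) (𝔏.Iclass_le_lieSpan h hy)
  simp only [Set.mem_iUnion]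
  rintro x ⟨p, hp, hx⟩ y ⟨q, hq, hy⟩
  exact lie_eq_zero_of_mem_generatorsAt hp.1 hq.1
    (fun hpq => hne (sigmaConnected_of_mem_sigmaClass hp hq hpq)) hx hy

/-- If `[g] ≠ [h]` then `[I_{[g]}, I_{[h]}] = 0`. -/
theorem Iclass_bracket_ne (𝔏 : GradedLieRinehart F G A L) {g h : G}
    (hg : g ∈ 𝔏.SuppL) (hh : h ∈ 𝔏.SuppL) (hne : ¬ 𝔏.SigmaConnected g h) :
    ∀ x ∈ 𝔏.Iclass g, ∀ y ∈ 𝔏.Iclass h, ⁅x, y⁆ = 0 :=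
  Iclass_bracket_ne_general 𝔏 hne
end

section
/- The relation ≈ on Λ_G, defined by g ≈ g' if and only if g is Λ_G-connected to g', is an equivalence relation. -/
open Submodule

/-! Read a chain `k₁, …, kₙ` through its partial products `pᵢ = k₁⋯kᵢ`: consecutive ones both
lie in `M = Λ_G^± ∪ Σ_G^±` (the last is `g'^{±1}` with `g' ∈ Λ_G`) and differ by an element of `M`.
As `M` is closed under inversion, this adjacency is symmetric and invariant under `x ↦ x⁻¹`, so its
reflexive-transitive closure `R` is an equivalence commuting with inversion, and `g ≈ g'` iff
`R g g'` or `R g g'⁻¹`. -/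

open Relation

section ChainStep

variable {G : Type*} [CommGroup G] (M : Set G)

def ChainStep (x y : G) : Prop := x ∈ M ∧ y ∈ M ∧ x⁻¹ * y ∈ M

variable {M}

theorem ChainStep.symm (hM : ∀ x ∈ M, x⁻¹ ∈ M) {x y : G} (h : ChainStep M x y) :
    ChainStep M y x :=
  ⟨h.2.1, h.1, by simpa using hM _ h.2.2⟩

theorem ChainStep.inv (hM : ∀ x ∈ M, x⁻¹ ∈ M) {x y : G} (h : ChainStep M x y) :
    ChainStep M x⁻¹ y⁻¹ :=
  ⟨hM x h.1, hM y h.2.1, by simpa [mul_comm] using hM _ h.2.2⟩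

theorem equivalence_reflTransGen_chainStep (hM : ∀ x ∈ M, x⁻¹ ∈ M) :
    Equivalence (ReflTransGen (ChainStep M)) :=
  haveI : Std.Symm (ChainStep M) := ⟨fun _ _ => ChainStep.symm hM⟩
  ⟨fun _ => .refl, fun h => symm h, .trans⟩

theorem reflTransGen_chainStep_mul_prod {x : G} {l : List G} (hl : ∀ k ∈ l, k ∈ M)
    (hprefix : ∀ i ≤ l.length, x * (l.take i).prod ∈ M) :
    ReflTransGen (ChainStep M) x (x * l.prod) := by
  induction l generalizing x with
  | nil => simpa using ReflTransGen.refl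
  | cons k t ih =>
    have hstep : ChainStep M x (x * k) :=
      ⟨by simpa using hprefix 0 (Nat.zero_le _), by simpa using hprefix 1 (by simp),
        by simpa using hl k (by simp)⟩
    have htail := ih (x := x * k) (fun k hk => hl k (by simp [hk]))
      fun i hi => by simpa [mul_assoc] using hprefix (i + 1) (by simpa using hi)
    rw [List.prod_cons, ← mul_assoc]
    exact .head hstep htail

theorem reflTransGen_chainStep_of_chain {g : G} {c : List G} (hhead : c.head? = some g)
    (hc : ∀ k ∈ c, k ∈ M) (hpart : ∀ i, 0 < i → i < c.length → (c.take i).prod ∈ M)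
    (hprod : c.prod ∈ M) : ReflTransGen (ChainStep M) g c.prod := by
  obtain ⟨t, rfl⟩ := List.head?_eq_some_iff.mp hhead
  rw [List.prod_cons]
  refine reflTransGen_chainStep_mul_prod (fun k hk => hc k (by simp [hk])) fun i hi => ?_
  rw [← List.prod_cons, ← List.take_succ_cons]
  rcases hi.lt_or_eq with hi | rfl
  · exact hpart (i + 1) i.succ_pos (by simpa using hi)
  · simpa using hprod

theorem exists_chain_of_reflTransGen {g y : G} (hg : g ∈ M)
    (h : ReflTransGen (ChainStep M) g y) :
    ∃ c : List G, c.head? = some g ∧ (∀ k ∈ c, k ∈ M) ∧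
      (∀ i, 0 < i → i < c.length → (c.take i).prod ∈ M) ∧ c.prod = y := by
  induction h with
  | refl => exact ⟨[g], rfl, by simpa using hg, fun i hi hi' => by simp at hi'; omega, by simp⟩
  | @tail x z _ hxz ih =>
    obtain ⟨c, hhead, hc, hpart, rfl⟩ := ih
    obtain ⟨hx, -, hk⟩ := hxz
    refine ⟨c ++ [c.prod⁻¹ * z], by simp [hhead], ?_, fun i hi hi' => ?_, by simp⟩
    · simpa [or_imp, forall_and] using ⟨hc, hk⟩
    · simp only [List.length_append, List.length_singleton] at hi'
      rw [List.take_append_of_le_length (by omega)]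
      rcases (Nat.lt_succ_iff.mp hi').lt_or_eq with hi' | rfl
      · exact hpart i hi hi'
      · simpa using hx

theorem chainConnected_empty_iff {g g' : G} (hg' : g' ∈ M) (hg'inv : g'⁻¹ ∈ M) :
    ChainConnected M ∅ g g' ↔ g ∈ M ∧
      (ReflTransGen (ChainStep M) g g' ∨ ReflTransGen (ChainStep M) g g'⁻¹) := by
  simp only [ChainConnected, Set.union_empty]
  constructor
  · rintro ⟨c, -, hhead, hc, hpart, hprod⟩
    refine ⟨hc g (List.mem_of_head? hhead), ?_⟩
    rcases hprod with hprod | hprod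
    · exact .inl (hprod ▸ reflTransGen_chainStep_of_chain hhead hc hpart (hprod ▸ hg'))
    · exact .inr (hprod ▸ reflTransGen_chainStep_of_chain hhead hc hpart (hprod ▸ hg'inv))
  · rintro ⟨hg, h | h⟩ <;> obtain ⟨c, hhead, hc, hpart, hprod⟩ := exists_chain_of_reflTransGen hg h
    · exact ⟨c, List.ne_nil_of_mem (List.mem_of_head? hhead), hhead, hc, hpart, .inl hprod⟩
    · exact ⟨c, List.ne_nil_of_mem (List.mem_of_head? hhead), hhead, hc, hpart, .inr hprod⟩

end ChainStep

theorem Equivalence.or_inv {α : Type*} [InvolutiveInv α] {r : α → α → Prop} (hr : Equivalence r)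
    (hinv : ∀ {x y}, r x y → r x⁻¹ y⁻¹) : Equivalence fun x y => r x y ∨ r x y⁻¹ where
  refl x := .inl (hr.refl x)
  symm
    | .inl h => .inl (hr.symm h)
    | .inr h => .inr (by simpa using hr.symm (hinv h))
  trans
    | .inl h, .inl h' => .inl (hr.trans h h')
    | .inl h, .inr h' => .inr (hr.trans h h')
    | .inr h, .inl h' => .inr (hr.trans h (hinv h'))
    | .inr h, .inr h' => .inl (by simpa using hr.trans h (hinv h'))

open GradedLieRinehart

variable {F : Type*} [Field F] {G : Type*} [CommGroup G] [DecidableEq G]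
  {A : Type*} [CommRing A] [Algebra F A]
  {L : Type*} [LieRing L] [LieAlgebra F L] [Module A L] [IsScalarTower F A L]

theorem GradedLieRinehart.inv_mem_lpm_union_spm (𝔏 : GradedLieRinehart F G A L) {x : G}
    (hx : x ∈ 𝔏.Lpm ∪ 𝔏.Spm) : x⁻¹ ∈ 𝔏.Lpm ∪ 𝔏.Spm := by
  simp only [Lpm, Spm, Set.mem_union, Set.mem_ofPred_eq, inv_inv] at hx ⊢
  tauto

/-- The Λ_G-connection relation on Λ_G is an equivalence relation. -/
theorem lambdaConnected_equivalence (𝔏 : GradedLieRinehart F G A L) :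
    Equivalence (fun g g' : {x : G // x ∈ 𝔏.SuppA} => 𝔏.LambdaConnected g.1 g'.1) := by
  have hM : ∀ x ∈ 𝔏.Lpm ∪ 𝔏.Spm, x⁻¹ ∈ 𝔏.Lpm ∪ 𝔏.Spm := fun _ => 𝔏.inv_mem_lpm_union_spm
  have hsupp : ∀ g ∈ 𝔏.SuppA, g ∈ 𝔏.Lpm ∪ 𝔏.Spm := fun g hg => .inl (.inl hg)
  have hrel : (fun g g' : {x : G // x ∈ 𝔏.SuppA} => 𝔏.LambdaConnected g.1 g'.1) =
      fun g g' => ReflTransGen (ChainStep (𝔏.Lpm ∪ 𝔏.Spm)) g.1 g'.1 ∨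
        ReflTransGen (ChainStep (𝔏.Lpm ∪ 𝔏.Spm)) g.1 g'.1⁻¹ := by
    ext ⟨g, hg⟩ ⟨g', hg'⟩
    rw [LambdaConnected, chainConnected_empty_iff (hsupp g' hg') (hM _ (hsupp g' hg')),
      and_iff_right (hsupp g hg)]
  rw [hrel]
  exact ((equivalence_reflTransGen_chainStep hM).or_inv
    (ReflTransGen.lift (·⁻¹) (fun _ _ => ChainStep.inv hM) _ _)).comap Subtype.val
end

section
/- If g, g' ∈ Λ_G with g ≈ g' (Λ_G-connected), and h ∈ Λ_G with g'h ∈ Λ_G, then g ≈ g'h. -/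
open Submodule

open GradedLieRinehart

variable {F : Type*} [Field F] {G : Type*} [CommGroup G] [DecidableEq G]
  {A : Type*} [CommRing A] [Algebra F A]
  {L : Type*} [LieRing L] [LieAlgebra F L] [Module A L] [IsScalarTower F A L]

/-! A chain from `g` to `g'` is extended by one more factor, `h`, or `h⁻¹` if its product is
`g'⁻¹`. The only new proper partial product is the old total product `g'^{±1} ∈ Λ_G^±`, and the
new total product is `(g'h)^{±1}`. -/

theorem ChainConnected.inv_right_iff {G : Type*} [CommGroup G] {Main Other : Set G}
    {g g' : G} : ChainConnected Main Other g g'⁻¹ ↔ ChainConnected Main Other g g' := by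
  simp only [ChainConnected, inv_inv, or_comm]

theorem chainConnected_prod_mul {G : Type*} [CommGroup G] {Main Other : Set G} {g k : G}
    {c : List G} (hhead : c.head? = some g) (hmem : ∀ x ∈ c, x ∈ Main ∪ Other)
    (hpart : ∀ i : ℕ, 0 < i → i < c.length → (c.take i).prod ∈ Main)
    (hprod : c.prod ∈ Main) (hk : k ∈ Main ∪ Other) :
    ChainConnected Main Other g (c.prod * k) := by
  refine ⟨c ++ [k], by simp, by simp [hhead], ?_, fun i hi hlt => ?_, Or.inl (by simp)⟩
  · simpa [or_imp, forall_and] using ⟨hmem, hk⟩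
  · have hle : i ≤ c.length := by simpa [Nat.lt_succ_iff] using hlt
    rw [List.take_append_of_le_length hle]
    rcases hle.lt_or_eq with hlt | rfl
    · exact hpart i hi hlt
    · rwa [List.take_length]

theorem ChainConnected.mul_right_s10 {G : Type*} [CommGroup G] {Main Other : Set G} {g g' k : G}
    (h : ChainConnected Main Other g g') (hg' : g' ∈ Main) (hg'_inv : g'⁻¹ ∈ Main)
    (hk : k ∈ Main ∪ Other) (hk_inv : k⁻¹ ∈ Main ∪ Other) :
    ChainConnected Main Other g (g' * k) := by
  obtain ⟨c, -, hhead, hmem, hpart, hprod | hprod⟩ := h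
  · rw [← hprod]
    exact chainConnected_prod_mul hhead hmem hpart (hprod ▸ hg') hk
  · rw [← ChainConnected.inv_right_iff, mul_inv, ← hprod]
    exact chainConnected_prod_mul hhead hmem hpart (hprod ▸ hg'_inv) hk_inv

namespace GradedLieRinehart

theorem inv_mem_Lpm (𝔏 : GradedLieRinehart F G A L) {k : G} : k⁻¹ ∈ 𝔏.Lpm ↔ k ∈ 𝔏.Lpm := by
  simp only [Lpm, Set.mem_ofPred_eq, inv_inv, or_comm]

theorem LambdaConnected.mul_right_s10 (𝔏 : GradedLieRinehart F G A L) {g g' h : G}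
    (hconn : 𝔏.LambdaConnected g g') (hg' : g' ∈ 𝔏.Lpm) (hh : h ∈ 𝔏.Lpm) :
    𝔏.LambdaConnected g (g' * h) :=
  ChainConnected.mul_right_s10 hconn (Or.inl hg') (Or.inl (𝔏.inv_mem_Lpm.2 hg'))
    (Or.inl (Or.inl hh)) (Or.inl (Or.inl (𝔏.inv_mem_Lpm.2 hh)))

end GradedLieRinehart

theorem lambda_class_mul_closed_general (𝔏 : GradedLieRinehart F G A L) {g g' h : G}
    (hg' : g' ∈ 𝔏.SuppA) (hconn : 𝔏.LambdaConnected g g')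
    (hh : h ∈ 𝔏.SuppA) :
    𝔏.LambdaConnected g (g' * h) :=
  LambdaConnected.mul_right_s10 𝔏 hconn (Or.inl hg') (Or.inl hh)

/-- If `g ≈ g'` and `h, g'h ∈ Λ_G` then `g ≈ g'h`. -/
theorem lambda_class_mul_closed (𝔏 : GradedLieRinehart F G A L) {g g' h : G}
    (hg : g ∈ 𝔏.SuppA) (hg' : g' ∈ 𝔏.SuppA) (hconn : 𝔏.LambdaConnected g g')
    (hh : h ∈ 𝔏.SuppA) (hmul : g' * h ∈ 𝔏.SuppA) :
    𝔏.LambdaConnected g (g' * h) :=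
  lambda_class_mul_closed_general 𝔏 hg' hconn hh
end

section
/- For any class [g] ∈ Λ_G/≈, the subspace 𝒜_{[g]} := A_{[g],1} ⊕ A_{[g]} satisfies 𝒜_{[g]}·𝒜_{[g]} ⊆ 𝒜_{[g]}. -/
open Submodule

open GradedLieRinehart

variable {F : Type*} [Field F] {G : Type*} [CommGroup G] [DecidableEq G]
  {A : Type*} [CommRing A] [Algebra F A]
  {L : Type*} [LieRing L] [LieAlgebra F L] [Module A L] [IsScalarTower F A L]


section AuxCalA
open scoped Pointwise

variable {F : Type*} [Field F] {G : Type*} [CommGroup G] [DecidableEq G]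
  {A : Type*} [CommRing A] [Algebra F A]
  {L : Type*} [LieRing L] [LieAlgebra F L] [Module A L] [IsScalarTower F A L]
  (𝔏 : GradedLieRinehart F G A L)

lemma aux_mulSub_eq (h k : G) : 𝔏.mulSub h k = 𝔏.𝓐 h * 𝔏.𝓐 k := by
  apply le_antisymm
  · apply Submodule.span_le.2
    rintro x ⟨a, ha, b, hb, rfl⟩
    exact Submodule.mul_mem_mul ha hb
  · exact Submodule.mul_le.2 fun a ha b hb => Submodule.subset_span ⟨a, ha, b, hb, rfl⟩

lemma aux_mulA_le (h k : G) : 𝔏.𝓐 h * 𝔏.𝓐 k ≤ 𝔏.𝓐 (h * k) :=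
  Submodule.mul_le.2 fun a ha b hb => 𝔏.mul_mem ha hb

lemma aux_lambda_extend {g g' g'' : G} (h : 𝔏.LambdaConnected g g')
    (h1 : g' ∈ 𝔏.SuppA) (h2 : g'' ∈ 𝔏.SuppA) : 𝔏.LambdaConnected g (g' * g'') := by
  obtain ⟨c, hne, hhead, hmem, hpartial, hprod⟩ := h
  have hg'' : g'' ∈ 𝔏.Lpm := Or.inl h2
  have hg''i : g''⁻¹ ∈ 𝔏.Lpm := Or.inr (by simpa using h2)
  have hg' : g' ∈ 𝔏.Lpm := Or.inl h1
  have hg'i : g'⁻¹ ∈ 𝔏.Lpm := Or.inr (by simpa using h1)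
  obtain ⟨a, l, rfl⟩ := List.exists_cons_of_ne_nil hne
  have key : ∀ x : G, x ∈ 𝔏.Lpm ∪ 𝔏.Spm →
      ((a :: l).prod ∈ 𝔏.Lpm ∪ 𝔏.Spm) →
      ∃ c' : List G, c' ≠ [] ∧ c'.head? = some g ∧
        (∀ k ∈ c', k ∈ (𝔏.Lpm ∪ 𝔏.Spm) ∪ (∅ : Set G)) ∧
        (∀ i : ℕ, 0 < i → i < c'.length → (c'.take i).prod ∈ 𝔏.Lpm ∪ 𝔏.Spm) ∧
        c'.prod = (a :: l).prod * x := by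
    intro x hx hp
    refine ⟨(a :: l) ++ [x], by simp, by simpa using hhead, ?_, ?_, by simp [mul_assoc]⟩
    · intro k hk
      rcases List.mem_append.1 hk with hk | hk
      · exact hmem k hk
      · simp only [List.mem_singleton] at hk
        subst hk
        exact Or.inl hx
    · intro i hi0 hi
      simp only [List.length_append, List.length_singleton] at hi
      have hle : i ≤ (a :: l).length := by omega
      rw [List.take_append_of_le_length hle]
      rcases lt_or_eq_of_le hle with hlt | heq
      · exact hpartial i hi0 hlt
      · rw [heq, List.take_length]
        exact hp
  rcases hprod with hp | hp
  · obtain ⟨c', h1', h2', h3', h4', h5'⟩ := key g'' (Or.inl hg'') (by rw [hp]; exact Or.inl hg')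
    exact ⟨c', h1', h2', h3', h4', Or.inl (by rw [h5', hp])⟩
  · obtain ⟨c', h1', h2', h3', h4', h5'⟩ := key g''⁻¹ (Or.inl hg''i) (by rw [hp]; exact Or.inl hg'i)
    refine ⟨c', h1', h2', h3', h4', Or.inr ?_⟩
    rw [h5', hp, mul_inv]

lemma aux_rhoSub_le_A1class {g g' : G}
    (cond : g' ∈ {g' | g' ∈ 𝔏.SuppA ∧ 𝔏.LambdaConnected g g' ∧ g' ∈ 𝔏.SuppL}) :
    𝔏.rhoSub g'⁻¹ g' ≤ 𝔏.A1class g :=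
  le_trans (le_iSup₂ (f := fun g'' (_ : g'' ∈ {g' | g' ∈ 𝔏.SuppA ∧ 𝔏.LambdaConnected g g' ∧
    g' ∈ 𝔏.SuppL}) => 𝔏.rhoSub g''⁻¹ g'') g' cond) le_sup_left

lemma aux_mulSub_le_A1class {g g' : G}
    (cond : g' ∈ {g' | g' ∈ 𝔏.SuppA ∧ 𝔏.LambdaConnected g g'}) :
    𝔏.mulSub g'⁻¹ g' ≤ 𝔏.A1class g :=
  le_trans (le_iSup₂ (f := fun g'' (_ : g'' ∈ {g' | g' ∈ 𝔏.SuppA ∧ 𝔏.LambdaConnected g g'}) =>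
    𝔏.mulSub g''⁻¹ g'') g' cond) le_sup_right

lemma aux_A_le_Aclass {g g' : G}
    (cond : g' ∈ {g' | g' ∈ 𝔏.SuppA ∧ 𝔏.LambdaConnected g g'}) :
    𝔏.𝓐 g' ≤ 𝔏.Aclass g :=
  le_iSup₂ (f := fun g'' (_ : g'' ∈ {g' | g' ∈ 𝔏.SuppA ∧ 𝔏.LambdaConnected g g'}) =>
    𝔏.𝓐 g'') g' cond

lemma aux_A1class_le_one (g : G) : 𝔏.A1class g ≤ 𝔏.𝓐 1 := by
  refine sup_le (iSup₂_le fun g' _ => ?_) (iSup₂_le fun g' _ => ?_)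
  · apply Submodule.span_le.2
    rintro x ⟨v, hv, a, ha, rfl⟩
    simpa using 𝔏.rho_mem hv ha
  · apply Submodule.span_le.2
    rintro x ⟨a, ha, b, hb, rfl⟩
    simpa using 𝔏.mul_mem ha hb

lemma aux_one_mul_rhoSub {g g' : G}
    (cond : g' ∈ {g' | g' ∈ 𝔏.SuppA ∧ 𝔏.LambdaConnected g g' ∧ g' ∈ 𝔏.SuppL}) :
    𝔏.𝓐 1 * 𝔏.rhoSub g'⁻¹ g' ≤ 𝔏.A1class g := by
  rw [show 𝔏.𝓐 1 * 𝔏.rhoSub g'⁻¹ g'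
      = Submodule.span F ((𝔏.𝓐 1 : Set A) * {x | ∃ v ∈ 𝔏.𝓛 g'⁻¹, ∃ a ∈ 𝔏.𝓐 g', x = 𝔏.ρ v a})
    from by rw [← Submodule.span_mul_span, Submodule.span_eq]; rfl]
  apply Submodule.span_le.2
  rintro x ⟨a, ha, y, ⟨v, hv, c, hc, rfl⟩, rfl⟩
  have e : a * 𝔏.ρ v c = 𝔏.ρ v (a * c) - (𝔏.ρ v) a * c := by
    have := Derivation.leibniz (𝔏.ρ v) a c
    simp only [smul_eq_mul] at this
    rw [this]; ring
  show a * 𝔏.ρ v c ∈ (𝔏.A1class g : Set A)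
  rw [SetLike.mem_coe, e]
  apply sub_mem
  · have hac : a * c ∈ 𝔏.𝓐 g' := by simpa using 𝔏.mul_mem ha hc
    exact aux_rhoSub_le_A1class 𝔏 cond (Submodule.subset_span ⟨v, hv, a * c, hac, rfl⟩)
  · have hra : (𝔏.ρ v) a ∈ 𝔏.𝓐 g'⁻¹ := by simpa using 𝔏.rho_mem hv ha
    exact aux_mulSub_le_A1class 𝔏 ⟨cond.1, cond.2.1⟩
      (Submodule.subset_span ⟨(𝔏.ρ v) a, hra, c, hc, rfl⟩)

lemma aux_one_mul_A1class (g : G) : 𝔏.𝓐 1 * 𝔏.A1class g ≤ 𝔏.A1class g := by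
  rw [A1class, Submodule.mul_sup]
  refine sup_le ?_ ?_
  · rw [Submodule.mul_iSup]
    refine iSup_le fun g' => ?_
    rw [Submodule.mul_iSup]
    exact iSup_le fun cond => aux_one_mul_rhoSub 𝔏 cond
  · rw [Submodule.mul_iSup]
    refine iSup_le fun g' => ?_
    rw [Submodule.mul_iSup]
    refine iSup_le fun cond => ?_
    rw [aux_mulSub_eq, ← mul_assoc]
    have h1 : 𝔏.𝓐 1 * 𝔏.𝓐 g'⁻¹ ≤ 𝔏.𝓐 g'⁻¹ := by
      have := aux_mulA_le 𝔏 1 g'⁻¹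
      rwa [one_mul] at this
    refine le_trans (mul_le_mul' h1 le_rfl) ?_
    rw [← aux_mulSub_eq]
    exact aux_mulSub_le_A1class 𝔏 cond

lemma aux_one_mul_Aclass (g : G) : 𝔏.𝓐 1 * 𝔏.Aclass g ≤ 𝔏.Aclass g := by
  rw [Aclass, Submodule.mul_iSup]
  refine iSup_le fun g' => ?_
  rw [Submodule.mul_iSup]
  refine iSup_le fun cond => ?_
  refine le_trans (le_trans (aux_mulA_le 𝔏 1 g') ?_) (aux_A_le_Aclass 𝔏 cond)
  rw [one_mul]

lemma aux_Aclass_mul_Aclass (g : G) : 𝔏.Aclass g * 𝔏.Aclass g ≤ 𝔏.calA g := by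
  rw [Aclass, Submodule.iSup_mul]
  refine iSup_le fun g' => ?_
  rw [Submodule.iSup_mul]
  refine iSup_le fun cond => ?_
  rw [Submodule.mul_iSup]
  refine iSup_le fun g'' => ?_
  rw [Submodule.mul_iSup]
  refine iSup_le fun cond'' => ?_
  by_cases h1 : g' * g'' = 1
  · have hg' : g' = g''⁻¹ := eq_inv_of_mul_eq_one_left h1
    rw [hg', ← aux_mulSub_eq]
    exact le_trans (aux_mulSub_le_A1class 𝔏 cond'') le_sup_left
  · by_cases h2 : 𝔏.𝓐 (g' * g'') = ⊥
    · refine le_trans (aux_mulA_le 𝔏 g' g'') ?_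
      rw [h2]; exact bot_le
    · refine le_trans (aux_mulA_le 𝔏 g' g'') (le_trans ?_ le_sup_right)
      exact aux_A_le_Aclass 𝔏 ⟨⟨h1, h2⟩, aux_lambda_extend 𝔏 cond.2 cond.1 cond''.1⟩

end AuxCalA

/-- `𝒜_{[g]} · 𝒜_{[g]} ⊆ 𝒜_{[g]}`. -/
theorem calA_mul_self (𝔏 : GradedLieRinehart F G A L) {g : G} (hg : g ∈ 𝔏.SuppA) :
    ∀ x ∈ 𝔏.calA g, ∀ y ∈ 𝔏.calA g, x * y ∈ 𝔏.calA g := by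
  have comm : 𝔏.Aclass g * 𝔏.A1class g = 𝔏.A1class g * 𝔏.Aclass g :=
    Submodule.mul_comm_of_commute fun m _ n _ => mul_comm m n
  have key : 𝔏.calA g * 𝔏.calA g ≤ 𝔏.calA g := by
    rw [calA, Submodule.sup_mul, Submodule.mul_sup, Submodule.mul_sup, comm]
    refine sup_le (sup_le ?_ ?_) (sup_le ?_ (aux_Aclass_mul_Aclass 𝔏 g))
    · refine le_trans (mul_le_mul' (aux_A1class_le_one 𝔏 g) le_rfl) ?_
      exact le_trans (aux_one_mul_A1class 𝔏 g) le_sup_left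
    · refine le_trans (mul_le_mul' (aux_A1class_le_one 𝔏 g) le_rfl) ?_
      exact le_trans (aux_one_mul_Aclass 𝔏 g) le_sup_right
    · refine le_trans (mul_le_mul' (aux_A1class_le_one 𝔏 g) le_rfl) ?_
      exact le_trans (aux_one_mul_Aclass 𝔏 g) le_sup_right
  exact fun x hx y hy => Submodule.mul_le.1 key x hx y hy
end
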